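/- arXiv:2512.24934 — 3 statements merged into one kernel-verified Lean document; each statement's English description precedes it below -/
import Mathlib

section
/- Let λ, c be as above with a critical index ℓ* satisfying λ(ℓ*) ≤ OPT and c(ℓ*) ≤ 4·OPT, and let ℓ' ∈ {1,…,k−1} with 4λ(ℓ') ≤ c(ℓ') and c(ℓ'+1) ≤ 4λ(ℓ'+1). Define ĥ = ℓ' if c(ℓ') ≤ 4λ(ℓ'+1), else ĥ = ℓ'+1. Then λ(ĥ) ≤ OPT and c(ĥ) ≤ 4·OPT. -/
theorem stmt6 (k : ℕ) (hk : 2 ≤ k) (OPT : ℝ) (hOPT : 0 ≤ OPT) (lam c : ℕ → ℝ)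
    (hlam0 : ∀ i, 1 ≤ i → i ≤ k → 0 ≤ lam i) (hc0 : ∀ i, 1 ≤ i → i ≤ k → 0 ≤ c i)
    (hmono : ∀ i j, 1 ≤ i → i ≤ j → j ≤ k → lam i ≤ lam j)
    (hanti : ∀ i j, 1 ≤ i → i ≤ j → j ≤ k → c j ≤ c i)
    (ℓstar : ℕ) (hℓ1 : 1 ≤ ℓstar) (hℓk : ℓstar ≤ k)
    (hlamstar : lam ℓstar ≤ OPT) (hcstar : c ℓstar ≤ 4 * OPT)
    (ℓ' : ℕ) (hℓ'1 : 1 ≤ ℓ') (hℓ'k : ℓ' ≤ k - 1)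
    (h1 : 4 * lam ℓ' ≤ c ℓ') (h2 : c (ℓ' + 1) ≤ 4 * lam (ℓ' + 1)) :
    lam (if c ℓ' ≤ 4 * lam (ℓ' + 1) then ℓ' else ℓ' + 1) ≤ OPT ∧
    c (if c ℓ' ≤ 4 * lam (ℓ' + 1) then ℓ' else ℓ' + 1) ≤ 4 * OPT := by
  have hℓ'k' : ℓ' + 1 ≤ k := by omega
  split_ifs with h
  · constructor
    · rcases le_or_gt ℓ' ℓstar with hle | hlt
      · exact (hmono ℓ' ℓstar hℓ'1 hle hℓk).trans hlamstar
      · have : c ℓ' ≤ c ℓstar := hanti ℓstar ℓ' hℓ1 hlt.le (by omega)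
        nlinarith
    · rcases le_or_gt (ℓ' + 1) ℓstar with hle | hlt
      · have : lam (ℓ' + 1) ≤ lam ℓstar := hmono (ℓ' + 1) ℓstar (by omega) hle hℓk
        linarith
      · have : c ℓ' ≤ c ℓstar := hanti ℓstar ℓ' hℓ1 (by omega) (by omega)
        linarith
  · have hlam1 : lam (ℓ' + 1) ≤ OPT := by
      rcases le_or_gt (ℓ' + 1) ℓstar with hle | hlt
      · exact (hmono (ℓ' + 1) ℓstar (by omega) hle hℓk).trans hlamstar
      · have : c ℓ' ≤ c ℓstar := hanti ℓstar ℓ' hℓ1 (by omega) (by omega)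
        nlinarith
    exact ⟨hlam1, by linarith⟩
end

section
/- Let m₁ ≤ m₂ ≤ … ≤ m_ℓ be reals and w₁,…,w_ℓ positive integers with total weight W = Σ wᵢ, where for each i, mᵢ is the median of a multiset Dᵢ of size wᵢ, meaning at least ⌈wᵢ/2⌉ elements of Dᵢ are ≤ mᵢ and at least ⌈wᵢ/2⌉ are ≥ mᵢ. Let j be the smallest index with Σ_{i≤j} wᵢ ≥ W/2, and let τ = m_j. Then at least W/4 elements of the union of the Dᵢ are ≤ τ and at least W/4 are ≥ τ. -/
lemma filter_card_sum' {ι α : Type*} (s : Finset ι) (D : ι → Multiset α)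
    (p : α → Prop) [DecidablePred p] :
    ((∑ i ∈ s, D i).filter p).card = ∑ i ∈ s, ((D i).filter p).card := by
  classical
  induction s using Finset.cons_induction with
  | empty => simp
  | cons a s ha ih => rw [Finset.sum_cons, Finset.sum_cons, Multiset.filter_add, Multiset.card_add, ih]

theorem stmt8 (ℓ : ℕ) (hℓ : 1 ≤ ℓ) (D : Fin ℓ → Multiset ℝ)
    (hw : ∀ i, 1 ≤ (D i).card)
    (m : Fin ℓ → ℝ)
    (hmed_le : ∀ i, ((D i).card : ℝ) / 2 ≤ (((D i).filter (fun x => x ≤ m i)).card : ℝ))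
    (hmed_ge : ∀ i, ((D i).card : ℝ) / 2 ≤ (((D i).filter (fun x => m i ≤ x)).card : ℝ))
    (hsort : ∀ i j : Fin ℓ, i ≤ j → m i ≤ m j)
    (j : Fin ℓ)
    (hj : ((∑ i, (D i).card : ℕ) : ℝ) / 2 ≤
      ((∑ i ∈ Finset.univ.filter (fun i => i ≤ j), (D i).card : ℕ) : ℝ))
    (hjmin : ∀ j' : Fin ℓ, j' < j →
      ((∑ i ∈ Finset.univ.filter (fun i => i ≤ j'), (D i).card : ℕ) : ℝ) <
        ((∑ i, (D i).card : ℕ) : ℝ) / 2) :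
    ((∑ i, (D i).card : ℕ) : ℝ) / 4 ≤ (((∑ i, D i).filter (fun x => x ≤ m j)).card : ℝ) ∧
    ((∑ i, (D i).card : ℕ) : ℝ) / 4 ≤ (((∑ i, D i).filter (fun x => m j ≤ x)).card : ℝ) := by
  classical
  have hWnn : (0:ℝ) ≤ ((∑ i, (D i).card : ℕ) : ℝ) := by positivity
  constructor
  · -- ≤ part
    have h1 : ∀ i ∈ Finset.univ.filter (fun i => i ≤ j),
        ((D i).card : ℝ)/2 ≤ (((D i).filter (fun x => x ≤ m j)).card : ℝ) := by
      intro i hi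
      simp only [Finset.mem_filter] at hi
      refine (hmed_le i).trans ?_
      have := Multiset.card_le_card (Multiset.monotone_filter_right (D i)
        (p := fun x => x ≤ m i) (q := fun x => x ≤ m j)
        (fun x hx => le_trans hx (hsort i j hi.2)))
      exact_mod_cast this
    have h2 := Finset.sum_le_sum h1
    have h3 : ((∑ i ∈ Finset.univ.filter (fun i => i ≤ j), (D i).card : ℕ) : ℝ) / 2
        = ∑ i ∈ Finset.univ.filter (fun i => i ≤ j), ((D i).card : ℝ)/2 := by
      rw [← Finset.sum_div]; push_cast; ring
    have h4 : ∑ i ∈ Finset.univ.filter (fun i => i ≤ j),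
          (((D i).filter (fun x => x ≤ m j)).card : ℝ)
        ≤ ∑ i, (((D i).filter (fun x => x ≤ m j)).card : ℝ) := by
      apply Finset.sum_le_sum_of_subset_of_nonneg (Finset.filter_subset _ _)
      intros; positivity
    have h5 : (((∑ i, D i).filter (fun x => x ≤ m j)).card : ℝ)
        = ∑ i, (((D i).filter (fun x => x ≤ m j)).card : ℝ) := by
      rw [filter_card_sum']; push_cast; ring
    rw [h5]; linarith
  · -- ≥ part
    have hT : ((∑ i, (D i).card : ℕ) : ℝ) / 2 ≤
        ((∑ i ∈ Finset.univ.filter (fun i => j ≤ i), (D i).card : ℕ) : ℝ) := by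
      have hsum : ∑ i ∈ Finset.univ.filter (fun i => j ≤ i), (D i).card
          + ∑ i ∈ Finset.univ.filter (fun i => ¬ j ≤ i), (D i).card
          = ∑ i, (D i).card := Finset.sum_filter_add_sum_filter_not _ _ _
      by_cases hj0 : (j : ℕ) = 0
      · have : Finset.univ.filter (fun i : Fin ℓ => ¬ j ≤ i) = ∅ := by
          apply Finset.filter_eq_empty_iff.mpr
          intro i _
          simp only [not_not]
          exact Fin.le_def.mpr (by omega)
        rw [this, Finset.sum_empty, add_zero] at hsum
        rw [hsum]; linarith
      · have hjpos : 0 < (j : ℕ) := Nat.pos_of_ne_zero hj0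
        set j' : Fin ℓ := ⟨(j : ℕ) - 1, by omega⟩ with hj'
        have hj'lt : j' < j := by simp [Fin.lt_def, hj']; omega
        have hfeq : Finset.univ.filter (fun i : Fin ℓ => ¬ j ≤ i)
            = Finset.univ.filter (fun i => i ≤ j') := by
          apply Finset.filter_congr
          intro i _
          simp only [not_le, Fin.lt_def, Fin.le_def, hj']
          constructor <;> (intro h; omega)
        have := hjmin j' hj'lt
        rw [hfeq] at hsum
        have hcast : ((∑ i ∈ Finset.univ.filter (fun i => j ≤ i), (D i).card : ℕ) : ℝ)
            + ((∑ i ∈ Finset.univ.filter (fun i => i ≤ j'), (D i).card : ℕ) : ℝ)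
            = ((∑ i, (D i).card : ℕ) : ℝ) := by exact_mod_cast congrArg Nat.cast hsum
        linarith
    have h1 : ∀ i ∈ Finset.univ.filter (fun i => j ≤ i),
        ((D i).card : ℝ)/2 ≤ (((D i).filter (fun x => m j ≤ x)).card : ℝ) := by
      intro i hi
      simp only [Finset.mem_filter] at hi
      refine (hmed_ge i).trans ?_
      have := Multiset.card_le_card (Multiset.monotone_filter_right (D i)
        (p := fun x => m i ≤ x) (q := fun x => m j ≤ x)
        (fun x hx => le_trans (hsort j i hi.2) hx))
      exact_mod_cast this
    have h2 := Finset.sum_le_sum h1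
    have h3 : ((∑ i ∈ Finset.univ.filter (fun i => j ≤ i), (D i).card : ℕ) : ℝ) / 2
        = ∑ i ∈ Finset.univ.filter (fun i => j ≤ i), ((D i).card : ℝ)/2 := by
      rw [← Finset.sum_div]; push_cast; ring
    have h4 : ∑ i ∈ Finset.univ.filter (fun i => j ≤ i),
          (((D i).filter (fun x => m j ≤ x)).card : ℝ)
        ≤ ∑ i, (((D i).filter (fun x => m j ≤ x)).card : ℝ) := by
      apply Finset.sum_le_sum_of_subset_of_nonneg (Finset.filter_subset _ _)
      intros; positivity
    have h5 : (((∑ i, D i).filter (fun x => m j ≤ x)).card : ℝ)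
        = ∑ i, (((D i).filter (fun x => m j ≤ x)).card : ℝ) := by
      rw [filter_card_sum']; push_cast; ring
    rw [h5]; linarith
end

section
/- Let (X,d) be a metric space, U ⊆ X finite nonempty, S* ⊆ U with |S*| = k and cost(S*) = max_{u∈U} d(u,S*) = OPT. Suppose T_ℓ ⊆ U hits each optimal cluster at most once, where clusters are given by an assignment σ : U → S* satisfying d(u,σ(u)) = d(u,S*). For each group G in a family 𝔾 of k subsets of U, suppose each optimal center s ∈ S* belongs to a distinct group (i.e., there is a bijection h : S* → 𝔾 with s ∈ h(s)). Then there is an injection from T_ℓ to 𝔾 matching each t ∈ T_ℓ to a group G with d(t, G) ≤ OPT, where d(t,G) = min_{g∈G} d(t,g). -/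
theorem stmt17 {X : Type*} [MetricSpace X] (U Sstar T : Finset X)
    (hU : U.Nonempty) (hS : Sstar.Nonempty) (hSU : Sstar ⊆ U) (hTU : T ⊆ U)
    (k : ℕ) (hSk : Sstar.card = k)
    (OPT : ℝ) (hOPT : ∀ u ∈ U, Sstar.inf' hS (fun s => dist u s) ≤ OPT)
    (σ : X → X)
    (hσ : ∀ u ∈ U, σ u ∈ Sstar ∧ dist u (σ u) = Sstar.inf' hS (fun s => dist u s))
    (hinj : Set.InjOn σ T)
    (𝔾 : Finset (Finset X)) (h𝔾card : 𝔾.card = k) (h𝔾U : ∀ G ∈ 𝔾, G ⊆ U)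
    (h : X → Finset X)
    (hhmem : ∀ s ∈ Sstar, h s ∈ 𝔾 ∧ s ∈ h s)
    (hhinj : Set.InjOn h Sstar)
    (hhsurj : ∀ G ∈ 𝔾, ∃ s ∈ Sstar, h s = G) :
    ∃ φ : X → Finset X, Set.InjOn φ T ∧
      ∀ t ∈ T, φ t ∈ 𝔾 ∧ ∃ g ∈ φ t, dist t g ≤ OPT := by
  refine ⟨fun t => h (σ t), ?_, ?_⟩
  · intro a ha b hb hab
    exact hinj ha hb (hhinj ((hσ a (hTU ha)).1) ((hσ b (hTU hb)).1) hab)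
  · intro t ht
    obtain ⟨hσS, hσd⟩ := hσ t (hTU ht)
    obtain ⟨hG, hmem⟩ := hhmem _ hσS
    exact ⟨hG, σ t, hmem, by rw [hσd]; exact hOPT t (hTU ht)⟩
end
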